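/- Let γ ∈ [0,1), let μ₀ be a probability distribution on S, let π be a policy on (S, A), let T and T̂ be transition kernels from S × A to S, and let R and R̂ be reward kernels with values in a finite set 𝓡 ⊂ ℝ satisfying |ρ| ≤ r_max, with mean rewards r(s,a) = ∑_{ρ} ρ·R(ρ|s,a) and r̂(s,a) = ∑_{ρ} ρ·R̂(ρ|s,a). Let (P_t) and (P̂_t) be the state-action occupancies generated from μ₀ under the same policy π by the kernels T and T̂ respectively, and define J = ∑_{t=0}^∞ γ^t ∑_{s,a} P_t(s,a)·r(s,a) and Ĵ = ∑_{t=0}^∞ γ^t ∑_{s,a} P̂_t(s,a)·r̂(s,a). Suppose for every t ≥ 0: ∑_{s,a} P_t(s,a)·D_TV(R(·|s,a) ‖ R̂(·|s,a)) ≤ ε_r and ∑_{s,a} P_t(s,a)·D_TV(T(·|s,a) ‖ T̂(·|s,a)) ≤ ε_m. Then |J − Ĵ| ≤ 2·r_max·∑_{t=0}^∞ γ^t·(ε_r + t·ε_m) = 2·r_max·(ε_r/(1−γ) + γ·ε_m/(1−γ)²). -/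

import Mathlib

/-! Write `r`, `r̂` for the mean rewards. At time `t`,
`|E_{P_t} r - E_{P̂_t} r̂| ≤ E_{P_t} |r - r̂| + r_max ‖P_t - P̂_t‖₁`, and `|r - r̂| ≤ 2 r_max D_TV(R ‖ R̂)`
pointwise, so the first term is at most `2 r_max ε_r`. Both occupancies are Markov chains on `S × A`
whose kernels draw `s' ∼ T(·|s,a)` (resp. `T̂`) and then `a' ∼ π(·|s')`; from
`P_{t+1} - P̂_{t+1} = P_t (M - M̂) + (P_t - P̂_t) M̂` the `ℓ¹` distance between them grows by at most
`2 ε_m` per step, so `‖P_t - P̂_t‖₁ ≤ 2 t ε_m`. Summing against `γ^t` gives the bound, and the closed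
form is `∑ γ^t = 1/(1-γ)` together with `∑ t γ^t = γ/(1-γ)²`. -/

open Finset

/-- Total-variation distance between two functions on a finite type. -/
noncomputable def tv {X : Type*} [Fintype X] (p q : X → ℝ) : ℝ :=
  (1 / 2) * ∑ x, |p x - q x|

/-- Total-variation distance between two functions restricted to a finite set. -/
noncomputable def tvOn {X : Type*} (F : Finset X) (p q : X → ℝ) : ℝ :=
  (1 / 2) * ∑ x ∈ F, |p x - q x|

open Matrix

section MarkovKernel

variable {X Y : Type*} [Fintype X] [Fintype Y]

theorem sum_vecMul_of_sum_row_eq_one {M : Matrix X Y ℝ} (hM : ∀ x, ∑ y, M x y = 1)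
    (p : X → ℝ) : ∑ y, (p ᵥ* M) y = ∑ x, p x := by
  simp only [vecMul, dotProduct]
  rw [sum_comm]
  simp [← mul_sum, hM]

theorem vecMul_mem_stdSimplex {M : Matrix X Y ℝ} (hM : ∀ x, M x ∈ stdSimplex ℝ Y) {p : X → ℝ}
    (hp : p ∈ stdSimplex ℝ X) : p ᵥ* M ∈ stdSimplex ℝ Y :=
  ⟨fun y => sum_nonneg fun x _ => mul_nonneg (hp.1 x) ((hM x).1 y),
    (sum_vecMul_of_sum_row_eq_one (fun x => (hM x).2) p).trans hp.2⟩

theorem sum_abs_vecMul_sub_vecMul_le {M M' : Matrix X Y ℝ} (hM' : ∀ x, M' x ∈ stdSimplex ℝ Y)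
    {p q : X → ℝ} (hp : ∀ x, 0 ≤ p x) :
    ∑ y, |(p ᵥ* M) y - (q ᵥ* M') y|
      ≤ ∑ x, p x * ∑ y, |M x y - M' x y| + ∑ x, |p x - q x| := by
  calc ∑ y, |(p ᵥ* M) y - (q ᵥ* M') y|
      ≤ ∑ y, ∑ x, (p x * |M x y - M' x y| + |p x - q x| * M' x y) := by
        gcongr with y
        calc |(p ᵥ* M) y - (q ᵥ* M') y|
            = |∑ x, (p x * (M x y - M' x y) + (p x - q x) * M' x y)| := by
              simp only [vecMul, dotProduct, ← sum_sub_distrib]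
              congr 1
              exact sum_congr rfl fun x _ => by ring
          _ ≤ ∑ x, |p x * (M x y - M' x y) + (p x - q x) * M' x y| := abs_sum_le_sum_abs _ _
          _ ≤ _ := by
            gcongr with x
            refine (abs_add_le _ _).trans_eq ?_
            rw [abs_mul, abs_mul, abs_of_nonneg (hp x), abs_of_nonneg ((hM' x).1 y)]
    _ = ∑ x, p x * ∑ y, |M x y - M' x y| + ∑ x, |p x - q x| := by
        rw [sum_comm, ← sum_add_distrib]
        simp [sum_add_distrib, ← mul_sum, (hM' _).2]

theorem mem_stdSimplex_of_succ_eq_vecMul {M : Matrix X X ℝ} (hM : ∀ x, M x ∈ stdSimplex ℝ X)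
    {p : ℕ → X → ℝ} (h0 : p 0 ∈ stdSimplex ℝ X) (hsucc : ∀ t, p (t + 1) = p t ᵥ* M) (t : ℕ) :
    p t ∈ stdSimplex ℝ X := by
  induction t with
  | zero => exact h0
  | succ t ih => rw [hsucc]; exact vecMul_mem_stdSimplex hM ih

theorem sum_abs_sub_le_of_succ_eq_vecMul {M M' : Matrix X X ℝ}
    (hM' : ∀ x, M' x ∈ stdSimplex ℝ X) {p q : ℕ → X → ℝ} (hp : ∀ t x, 0 ≤ p t x)
    (h0 : p 0 = q 0) (hpsucc : ∀ t, p (t + 1) = p t ᵥ* M) (hqsucc : ∀ t, q (t + 1) = q t ᵥ* M')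
    {δ : ℝ} (hδ : ∀ t, ∑ x, p t x * ∑ y, |M x y - M' x y| ≤ δ) (t : ℕ) :
    ∑ x, |p t x - q t x| ≤ t * δ := by
  induction t with
  | zero => simp [h0]
  | succ t ih =>
    rw [hpsucc, hqsucc]
    calc _ ≤ _ := sum_abs_vecMul_sub_vecMul_le hM' (hp t)
      _ ≤ δ + t * δ := add_le_add (hδ t) ih
      _ = (t + 1 : ℕ) * δ := by push_cast; ring

end MarkovKernel

theorem two_mul_tv {X : Type*} [Fintype X] (p q : X → ℝ) : 2 * tv p q = ∑ x, |p x - q x| := by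
  rw [tv]; ring

theorem two_mul_tvOn {X : Type*} (F : Finset X) (p q : X → ℝ) :
    2 * tvOn F p q = ∑ x ∈ F, |p x - q x| := by
  rw [tvOn]; ring

section Policy

variable {S A : Type*} [Fintype S] [Fintype A]

def withPolicy (μ : S → ℝ) (π : S → A → ℝ) : S × A → ℝ := fun x => μ x.1 * π x.1 x.2

theorem sum_withPolicy {π : S → A → ℝ} (hπ : ∀ s, ∑ a, π s a = 1) (μ : S → ℝ) :
    ∑ x, withPolicy μ π x = ∑ s, μ s := by
  simp [withPolicy, Fintype.sum_prod_type, ← mul_sum, hπ]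

theorem withPolicy_mem_stdSimplex {μ : S → ℝ} (hμ : μ ∈ stdSimplex ℝ S) {π : S → A → ℝ}
    (hπ : ∀ s, π s ∈ stdSimplex ℝ A) : withPolicy μ π ∈ stdSimplex ℝ (S × A) :=
  ⟨fun _ => mul_nonneg (hμ.1 _) ((hπ _).1 _), (sum_withPolicy (fun s => (hπ s).2) μ).trans hμ.2⟩

theorem sum_abs_withPolicy_sub_withPolicy {π : S → A → ℝ} (hπ : ∀ s, π s ∈ stdSimplex ℝ A)
    (μ ν : S → ℝ) : ∑ x, |withPolicy μ π x - withPolicy ν π x| = ∑ s, |μ s - ν s| := by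
  rw [← sum_withPolicy (fun s => (hπ s).2)]
  refine sum_congr rfl fun _ _ => ?_
  simp only [withPolicy, ← sub_mul, abs_mul, abs_of_nonneg ((hπ _).1 _)]

def occupancyKernel (K : S × A → S → ℝ) (π : S → A → ℝ) : Matrix (S × A) (S × A) ℝ :=
  fun sa => withPolicy (K sa) π

theorem occupancyKernel_mem_stdSimplex {K : S × A → S → ℝ} (hK : ∀ sa, K sa ∈ stdSimplex ℝ S)
    {π : S → A → ℝ} (hπ : ∀ s, π s ∈ stdSimplex ℝ A) (sa : S × A) :
    occupancyKernel K π sa ∈ stdSimplex ℝ (S × A) :=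
  withPolicy_mem_stdSimplex (hK sa) hπ

theorem sum_abs_occupancyKernel_sub {π : S → A → ℝ} (hπ : ∀ s, π s ∈ stdSimplex ℝ A)
    (K K' : S × A → S → ℝ) (sa : S × A) :
    ∑ x, |occupancyKernel K π sa x - occupancyKernel K' π sa x| = 2 * tv (K sa) (K' sa) := by
  rw [two_mul_tv]
  exact sum_abs_withPolicy_sub_withPolicy hπ _ _

def IsOccupancy (μ : S → ℝ) (π : S → A → ℝ) (K : S × A → S → ℝ) (P : ℕ → S × A → ℝ) : Prop :=
  (∀ sa, P 0 sa = μ sa.1 * π sa.1 sa.2) ∧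
    ∀ t x, P (t + 1) x = ∑ sa, P t sa * K sa x.1 * π x.1 x.2

namespace IsOccupancy

variable {μ : S → ℝ} {π : S → A → ℝ} {K K' : S × A → S → ℝ} {P P' : ℕ → S × A → ℝ}

theorem zero_eq (hP : IsOccupancy μ π K P) : P 0 = withPolicy μ π :=
  funext hP.1

theorem succ_eq_vecMul (hP : IsOccupancy μ π K P) (t : ℕ) :
    P (t + 1) = P t ᵥ* occupancyKernel K π := by
  funext x
  simp [hP.2, vecMul, dotProduct, occupancyKernel, withPolicy, mul_assoc]

theorem mem_stdSimplex (hP : IsOccupancy μ π K P) (hμ : μ ∈ stdSimplex ℝ S)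
    (hπ : ∀ s, π s ∈ stdSimplex ℝ A) (hK : ∀ sa, K sa ∈ stdSimplex ℝ S) (t : ℕ) :
    P t ∈ stdSimplex ℝ (S × A) :=
  mem_stdSimplex_of_succ_eq_vecMul (occupancyKernel_mem_stdSimplex hK hπ)
    (hP.zero_eq ▸ withPolicy_mem_stdSimplex hμ hπ) hP.succ_eq_vecMul t

theorem sum_abs_sub_le (hP : IsOccupancy μ π K P) (hP' : IsOccupancy μ π K' P')
    (hμ : μ ∈ stdSimplex ℝ S) (hπ : ∀ s, π s ∈ stdSimplex ℝ A) (hK : ∀ sa, K sa ∈ stdSimplex ℝ S)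
    (hK' : ∀ sa, K' sa ∈ stdSimplex ℝ S) {ε : ℝ} (hε : ∀ t, ∑ sa, P t sa * tv (K sa) (K' sa) ≤ ε)
    (t : ℕ) : ∑ sa, |P t sa - P' t sa| ≤ t * (2 * ε) :=
  sum_abs_sub_le_of_succ_eq_vecMul (occupancyKernel_mem_stdSimplex hK' hπ)
    (fun t => (hP.mem_stdSimplex hμ hπ hK t).1) (hP.zero_eq.trans hP'.zero_eq.symm)
    hP.succ_eq_vecMul hP'.succ_eq_vecMul
    (fun t => by
      simp only [sum_abs_occupancyKernel_sub hπ, mul_left_comm _ (2 : ℝ), ← mul_sum]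
      linarith [hε t])
    t

end IsOccupancy

end Policy

section Expectation

variable {ι : Type*} {F : Finset ι} {c : ℝ}

theorem abs_sum_mul_sub_sum_mul_le {f : ι → ℝ} (hf : ∀ x ∈ F, |f x| ≤ c) (p q : ι → ℝ) :
    |∑ x ∈ F, f x * p x - ∑ x ∈ F, f x * q x| ≤ c * ∑ x ∈ F, |p x - q x| := by
  rw [← sum_sub_distrib, mul_sum]
  refine (abs_sum_le_sum_abs _ _).trans (sum_le_sum fun x hx => ?_)
  rw [← mul_sub, abs_mul]
  exact mul_le_mul_of_nonneg_right (hf x hx) (abs_nonneg _)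

theorem abs_sum_mul_le {f p : ι → ℝ} (hf : ∀ x ∈ F, |f x| ≤ c) (hp : ∀ x ∈ F, 0 ≤ p x) :
    |∑ x ∈ F, f x * p x| ≤ c * ∑ x ∈ F, p x := by
  simpa [sum_congr rfl fun x hx => abs_of_nonneg (hp x hx)] using
    abs_sum_mul_sub_sum_mul_le hf p 0

theorem abs_sum_mul_sub_sum_mul_le_add {p q f g : ι → ℝ} (hp : ∀ x ∈ F, 0 ≤ p x)
    (hg : ∀ x ∈ F, |g x| ≤ c) :
    |∑ x ∈ F, p x * f x - ∑ x ∈ F, q x * g x|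
      ≤ ∑ x ∈ F, p x * |f x - g x| + c * ∑ x ∈ F, |p x - q x| := by
  rw [← sum_sub_distrib, mul_sum, ← sum_add_distrib]
  refine (abs_sum_le_sum_abs _ _).trans (sum_le_sum fun x hx => ?_)
  calc |p x * f x - q x * g x| = |p x * (f x - g x) + (p x - q x) * g x| := by ring_nf
    _ ≤ p x * |f x - g x| + |p x - q x| * c := by
        refine (abs_add_le _ _).trans ?_
        rw [abs_mul, abs_mul, abs_of_nonneg (hp x hx)]
        gcongr
        exact hg x hx
    _ = p x * |f x - g x| + c * |p x - q x| := by ring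

end Expectation

section Reward

variable {X : Type*} [Fintype X] {F : Finset ℝ} {rmax : ℝ}

theorem abs_sum_mul_expectedReward_le (hbound : ∀ ρ ∈ F, |ρ| ≤ rmax) {R : X → ℝ → ℝ}
    (hR : ∀ x, (∀ ρ ∈ F, 0 ≤ R x ρ) ∧ ∑ ρ ∈ F, R x ρ = 1) {p : X → ℝ}
    (hp : p ∈ stdSimplex ℝ X) : |∑ x, p x * ∑ ρ ∈ F, ρ * R x ρ| ≤ rmax := by
  have hmean : ∀ x, |∑ ρ ∈ F, ρ * R x ρ| ≤ rmax := fun x => by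
    simpa [(hR x).2] using abs_sum_mul_le hbound (hR x).1
  simpa [mul_comm, hp.2] using
    abs_sum_mul_le (F := univ) (fun x _ => hmean x) fun x _ => hp.1 x

theorem abs_sum_mul_expectedReward_sub_le (hbound : ∀ ρ ∈ F, |ρ| ≤ rmax) {R R' : X → ℝ → ℝ}
    (hR' : ∀ x, (∀ ρ ∈ F, 0 ≤ R' x ρ) ∧ ∑ ρ ∈ F, R' x ρ = 1) {p q : X → ℝ}
    (hp : ∀ x, 0 ≤ p x) :
    |∑ x, p x * ∑ ρ ∈ F, ρ * R x ρ - ∑ x, q x * ∑ ρ ∈ F, ρ * R' x ρ|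
      ≤ 2 * rmax * ∑ x, p x * tvOn F (R x) (R' x) + rmax * ∑ x, |p x - q x| := by
  have hmean : ∀ x, |∑ ρ ∈ F, ρ * R' x ρ| ≤ rmax := fun x => by
    simpa [(hR' x).2] using abs_sum_mul_le hbound (hR' x).1
  refine (abs_sum_mul_sub_sum_mul_le_add (fun x _ => hp x) fun x _ => hmean x).trans ?_
  gcongr ?_ + _
  rw [mul_sum]
  refine sum_le_sum fun x _ => ?_
  refine (mul_le_mul_of_nonneg_left (abs_sum_mul_sub_sum_mul_le hbound _ _) (hp x)).trans_eq ?_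
  rw [← two_mul_tvOn]
  ring

end Reward

theorem summable_pow_mul_of_abs_le {γ : ℝ} (hγ0 : 0 ≤ γ) (hγ1 : γ < 1) {b : ℕ → ℝ} {c : ℝ}
    (hb : ∀ t, |b t| ≤ c) : Summable fun t => γ ^ t * b t :=
  ((summable_geometric_of_lt_one hγ0 hγ1).mul_left c).of_norm_bounded fun t => by
    rw [Real.norm_eq_abs, abs_mul, abs_of_nonneg (pow_nonneg hγ0 t), mul_comm c]
    exact mul_le_mul_of_nonneg_left (hb t) (pow_nonneg hγ0 t)

theorem abs_tsum_sub_tsum_le {ι : Type*} {f g h : ι → ℝ} (hg : Summable g) (hh : Summable h)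
    (hfg : ∀ i, |f i - g i| ≤ h i) : |∑' i, f i - ∑' i, g i| ≤ ∑' i, h i := by
  have hf : Summable f := by
    simpa using (hh.of_norm_bounded hfg).add hg
  rw [← hf.tsum_sub hg]
  exact tsum_of_norm_bounded (f := fun i => f i - g i) hh.hasSum hfg

theorem hasSum_pow_mul_add_natCast_mul {γ : ℝ} (hγ : |γ| < 1) (a b : ℝ) :
    HasSum (fun t : ℕ => γ ^ t * (a + t * b)) (a / (1 - γ) + γ * b / (1 - γ) ^ 2) := by
  have hsplit : (fun t : ℕ => γ ^ t * (a + t * b)) = fun t : ℕ => a * γ ^ t + b * (t * γ ^ t) := by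
    funext t; ring
  rw [hsplit, show a / (1 - γ) + γ * b / (1 - γ) ^ 2 = a * (1 - γ)⁻¹ + b * (γ / (1 - γ) ^ 2) by ring]
  exact ((hasSum_geometric_of_abs_lt_one hγ).mul_left a).add
    ((hasSum_coe_mul_geometric_of_norm_lt_one hγ).mul_left b)

theorem return_gap_model_error_general
    {S A : Type*} [Fintype S] [Fintype A]
    (γ : ℝ) (hγ0 : 0 ≤ γ) (hγ1 : γ < 1)
    (μ0 : S → ℝ) (hμ0 : (∀ s, 0 ≤ μ0 s) ∧ ∑ s, μ0 s = 1)
    (π : S → A → ℝ)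
    (hπ : ∀ s, (∀ a, 0 ≤ π s a) ∧ ∑ a, π s a = 1)
    (T That : S × A → S → ℝ)
    (hT : ∀ sa, (∀ s', 0 ≤ T sa s') ∧ ∑ s', T sa s' = 1)
    (hThat : ∀ sa, (∀ s', 0 ≤ That sa s') ∧ ∑ s', That sa s' = 1)
    (Rset : Finset ℝ) (rmax : ℝ)
    (hbound : ∀ ρ ∈ Rset, |ρ| ≤ rmax)
    (R Rhat : S × A → ℝ → ℝ)
    (hRhat : ∀ sa, (∀ ρ ∈ Rset, 0 ≤ Rhat sa ρ) ∧ ∑ ρ ∈ Rset, Rhat sa ρ = 1)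
    (P Phat : ℕ → S × A → ℝ)
    (hP0 : ∀ sa : S × A, P 0 sa = μ0 sa.1 * π sa.1 sa.2)
    (hPhat0 : ∀ sa : S × A, Phat 0 sa = μ0 sa.1 * π sa.1 sa.2)
    (hPrec : ∀ t (x : S × A),
      P (t + 1) x = ∑ sa : S × A, P t sa * T sa x.1 * π x.1 x.2)
    (hPhatrec : ∀ t (x : S × A),
      Phat (t + 1) x = ∑ sa : S × A, Phat t sa * That sa x.1 * π x.1 x.2)
    (εr εm : ℝ)
    (hεr : ∀ t, ∑ sa : S × A, P t sa * tvOn Rset (R sa) (Rhat sa) ≤ εr)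
    (hεm : ∀ t, ∑ sa : S × A, P t sa * tv (T sa) (That sa) ≤ εm) :
    |(∑' t : ℕ, γ ^ t * ∑ sa : S × A, P t sa * ∑ ρ ∈ Rset, ρ * R sa ρ)
       - ∑' t : ℕ, γ ^ t * ∑ sa : S × A, Phat t sa * ∑ ρ ∈ Rset, ρ * Rhat sa ρ|
      ≤ 2 * rmax * ∑' t : ℕ, γ ^ t * (εr + t * εm)
    ∧ 2 * rmax * ∑' t : ℕ, γ ^ t * (εr + t * εm)
      = 2 * rmax * (εr / (1 - γ) + γ * εm / (1 - γ) ^ 2) := by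
  have hPocc : IsOccupancy μ0 π T P := ⟨hP0, hPrec⟩
  have hPhatocc : IsOccupancy μ0 π That Phat := ⟨hPhat0, hPhatrec⟩
  have hP := hPocc.mem_stdSimplex hμ0 hπ hT
  have hdrift := hPocc.sum_abs_sub_le hPhatocc hμ0 hπ hT hThat hεm
  have hrmax : 0 ≤ rmax := (abs_nonneg _).trans (abs_sum_mul_expectedReward_le hbound hRhat (hP 0))
  have hstep : ∀ t : ℕ, |∑ sa, P t sa * ∑ ρ ∈ Rset, ρ * R sa ρ
      - ∑ sa, Phat t sa * ∑ ρ ∈ Rset, ρ * Rhat sa ρ| ≤ 2 * rmax * (εr + t * εm) := fun t =>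
    calc _ ≤ 2 * rmax * ∑ sa, P t sa * tvOn Rset (R sa) (Rhat sa)
          + rmax * ∑ sa, |P t sa - Phat t sa| :=
          abs_sum_mul_expectedReward_sub_le hbound hRhat (hP t).1
      _ ≤ 2 * rmax * εr + rmax * (t * (2 * εm)) := by gcongr; exacts [hεr t, hdrift t]
      _ = 2 * rmax * (εr + t * εm) := by ring
  have hsum := hasSum_pow_mul_add_natCast_mul (abs_lt.2 ⟨by linarith, hγ1⟩) εr εm
  refine ⟨?_, by rw [hsum.tsum_eq]⟩
  rw [← tsum_mul_left]
  refine abs_tsum_sub_tsum_le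
    (summable_pow_mul_of_abs_le hγ0 hγ1 fun t =>
      abs_sum_mul_expectedReward_le hbound hRhat (hPhatocc.mem_stdSimplex hμ0 hπ hThat t))
    (hsum.summable.mul_left _) fun t => ?_
  rw [← mul_sub, abs_mul, abs_of_nonneg (pow_nonneg hγ0 t), mul_left_comm]
  gcongr
  exact hstep t

/-- Return gap between the true and the model dynamics under a same policy: bounded by
2·r_max·∑ γ^t·(ε_r + t·ε_m) = 2·r_max·(ε_r/(1−γ) + γ·ε_m/(1−γ)²). -/
theorem return_gap_model_error
    {S A : Type*} [Fintype S] [Fintype A] [Nonempty S] [Nonempty A]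
    (γ : ℝ) (hγ0 : 0 ≤ γ) (hγ1 : γ < 1)
    (μ0 : S → ℝ) (hμ0 : (∀ s, 0 ≤ μ0 s) ∧ ∑ s, μ0 s = 1)
    (π : S → A → ℝ)
    (hπ : ∀ s, (∀ a, 0 ≤ π s a) ∧ ∑ a, π s a = 1)
    (T That : S × A → S → ℝ)
    (hT : ∀ sa, (∀ s', 0 ≤ T sa s') ∧ ∑ s', T sa s' = 1)
    (hThat : ∀ sa, (∀ s', 0 ≤ That sa s') ∧ ∑ s', That sa s' = 1)
    (Rset : Finset ℝ) (rmax : ℝ)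
    (hbound : ∀ ρ ∈ Rset, |ρ| ≤ rmax)
    (R Rhat : S × A → ℝ → ℝ)
    (hR : ∀ sa, (∀ ρ ∈ Rset, 0 ≤ R sa ρ) ∧ ∑ ρ ∈ Rset, R sa ρ = 1)
    (hRhat : ∀ sa, (∀ ρ ∈ Rset, 0 ≤ Rhat sa ρ) ∧ ∑ ρ ∈ Rset, Rhat sa ρ = 1)
    (P Phat : ℕ → S × A → ℝ)
    (hP0 : ∀ sa : S × A, P 0 sa = μ0 sa.1 * π sa.1 sa.2)
    (hPhat0 : ∀ sa : S × A, Phat 0 sa = μ0 sa.1 * π sa.1 sa.2)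
    (hPrec : ∀ t (x : S × A),
      P (t + 1) x = ∑ sa : S × A, P t sa * T sa x.1 * π x.1 x.2)
    (hPhatrec : ∀ t (x : S × A),
      Phat (t + 1) x = ∑ sa : S × A, Phat t sa * That sa x.1 * π x.1 x.2)
    (εr εm : ℝ)
    (hεr : ∀ t, ∑ sa : S × A, P t sa * tvOn Rset (R sa) (Rhat sa) ≤ εr)
    (hεm : ∀ t, ∑ sa : S × A, P t sa * tv (T sa) (That sa) ≤ εm) :
    |(∑' t : ℕ, γ ^ t * ∑ sa : S × A, P t sa * ∑ ρ ∈ Rset, ρ * R sa ρ)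
       - ∑' t : ℕ, γ ^ t * ∑ sa : S × A, Phat t sa * ∑ ρ ∈ Rset, ρ * Rhat sa ρ|
      ≤ 2 * rmax * ∑' t : ℕ, γ ^ t * (εr + t * εm)
    ∧ 2 * rmax * ∑' t : ℕ, γ ^ t * (εr + t * εm)
      = 2 * rmax * (εr / (1 - γ) + γ * εm / (1 - γ) ^ 2) :=
  return_gap_model_error_general γ hγ0 hγ1 μ0 hμ0 π hπ T That hT hThat Rset rmax hbound R Rhat hRhat
    P Phat hP0 hPhat0 hPrec hPhatrec εr εm hεr hεm
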